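/- For 0 < q < 1, 0 < z < 1, and n ≥ 1, the difference I_{n-1}(q;z)·I_{n+1}(q;z) - (I_n(q;z))^2 equals Σ_{k=n+2}^∞ [(q^k - q^{n+1})/((q;q)_{n+1}(q;q)_k)] z^{k+n}, and in particular every term of this series is negative. -/

import Mathlib

open Finset Filter Topology

noncomputable def qPoch (q : ℝ) (m : ℕ) : ℝ := ∏ j ∈ Finset.range m, (1 - q ^ (j + 1))

/-- Tail of the q-exponential e(q;z) starting at index m; I_n(q;z) = qexpTail q z (n+1). -/
noncomputable def qexpTail (q z : ℝ) (m : ℕ) : ℝ := ∑' k : ℕ, z ^ (m + k) / qPoch q (m + k)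

/-!
Write `a k = z ^ k / (q;q)_k` and `T m = ∑_{k ≥ m} a k`. Peeling off the first terms,
`T n = a n + T (n+1)` and `T (n+1) = a (n+1) + T (n+2)`, so
`T n * T (n+2) - T (n+1) ^ 2 = a n * T (n+2) - a (n+1) * T (n+1)`, which is the series of
`a n * a (n+2+k) - a (n+1) * a (n+1+k)`. Since `a (j+1) = a j * z / (1 - q ^ (j+1))`, that term is
the stated one, and it is negative because `q ^ (n+2+k) < q ^ (n+1)`.
-/

noncomputable def qexpTerm (q z : ℝ) (k : ℕ) : ℝ := z ^ k / qPoch q k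

section

variable {q : ℝ}

lemma one_sub_pow_pos (hq0 : 0 ≤ q) (hq1 : q < 1) (j : ℕ) : 0 < 1 - q ^ (j + 1) :=
  sub_pos.mpr (pow_lt_one₀ hq0 hq1 j.succ_ne_zero)

lemma qPoch_pos (hq0 : 0 ≤ q) (hq1 : q < 1) (m : ℕ) : 0 < qPoch q m :=
  Finset.prod_pos fun j _ => one_sub_pow_pos hq0 hq1 j

lemma qPoch_succ (q : ℝ) (m : ℕ) : qPoch q (m + 1) = qPoch q m * (1 - q ^ (m + 1)) :=
  Finset.prod_range_succ _ _

lemma qexpTerm_succ (hq0 : 0 ≤ q) (hq1 : q < 1) (z : ℝ) (m : ℕ) :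
    qexpTerm q z (m + 1) = z / (1 - q ^ (m + 1)) * qexpTerm q z m := by
  have := (one_sub_pow_pos hq0 hq1 m).ne'
  have := (qPoch_pos hq0 hq1 m).ne'
  rw [qexpTerm, qexpTerm, qPoch_succ, pow_succ]
  field_simp

lemma summable_qexpTerm (hq0 : 0 ≤ q) (hq1 : q < 1) {z : ℝ} (hz : |z| < 1) :
    Summable (qexpTerm q z) := by
  refine summable_of_ratio_norm_eventually_le (r := (1 + |z|) / 2) (by linarith) ?_
  have hqpow : Tendsto (fun k : ℕ => q ^ (k + 1)) atTop (𝓝 0) :=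
    (tendsto_pow_atTop_nhds_zero_of_lt_one hq0 hq1).comp (tendsto_add_atTop_nat 1)
  filter_upwards [hqpow.eventually_lt_const (show (0 : ℝ) < (1 - |z|) / 2 by linarith)]
    with k hk
  have hden := one_sub_pow_pos hq0 hq1 k
  have hratio : |z| / (1 - q ^ (k + 1)) ≤ (1 + |z|) / 2 := by
    rw [div_le_div_iff₀ hden two_pos]
    nlinarith [pow_nonneg hq0 (k + 1), abs_nonneg z]
  rw [qexpTerm_succ hq0 hq1, norm_mul, Real.norm_eq_abs, abs_div, abs_of_pos hden]
  exact mul_le_mul_of_nonneg_right hratio (norm_nonneg _)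

lemma qexpTail_eq_tsum_qexpTerm (z : ℝ) (m : ℕ) :
    qexpTail q z m = ∑' k, qexpTerm q z (m + k) := rfl

lemma summable_qexpTerm_add (hq0 : 0 ≤ q) (hq1 : q < 1) {z : ℝ} (hz : |z| < 1) (m : ℕ) :
    Summable fun k => qexpTerm q z (m + k) := by
  simpa only [add_comm m] using (summable_nat_add_iff m).mpr (summable_qexpTerm hq0 hq1 hz)

lemma qexpTail_eq_qexpTerm_add (hq0 : 0 ≤ q) (hq1 : q < 1) {z : ℝ} (hz : |z| < 1) (m : ℕ) :
    qexpTail q z m = qexpTerm q z m + qexpTail q z (m + 1) := by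
  rw [qexpTail_eq_tsum_qexpTerm, (summable_qexpTerm_add hq0 hq1 hz m).tsum_eq_zero_add,
    qexpTail_eq_tsum_qexpTerm]
  simp only [add_zero, add_right_comm m 1]
  rfl

lemma qexpTail_turan_eq_tsum (hq0 : 0 ≤ q) (hq1 : q < 1) {z : ℝ} (hz : |z| < 1) (n : ℕ) :
    qexpTail q z n * qexpTail q z (n + 2) - qexpTail q z (n + 1) ^ 2 =
      ∑' k, (qexpTerm q z n * qexpTerm q z (n + 2 + k) -
        qexpTerm q z (n + 1) * qexpTerm q z (n + 1 + k)) := by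
  have hsub := ((summable_qexpTerm_add hq0 hq1 hz (n + 2)).mul_left (qexpTerm q z n)).tsum_sub
    ((summable_qexpTerm_add hq0 hq1 hz (n + 1)).mul_left (qexpTerm q z (n + 1)))
  rw [hsub, tsum_mul_left, tsum_mul_left, ← qexpTail_eq_tsum_qexpTerm,
    ← qexpTail_eq_tsum_qexpTerm, qexpTail_eq_qexpTerm_add hq0 hq1 hz n,
    qexpTail_eq_qexpTerm_add hq0 hq1 hz (n + 1)]
  ring

lemma qexpTerm_turan (hq0 : 0 ≤ q) (hq1 : q < 1) (z : ℝ) (n k : ℕ) :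
    qexpTerm q z n * qexpTerm q z (n + 2 + k) - qexpTerm q z (n + 1) * qexpTerm q z (n + 1 + k) =
      (q ^ (n + 2 + k) - q ^ (n + 1)) / (qPoch q (n + 1) * qPoch q (n + 2 + k)) *
        z ^ (n + 2 + k + n) := by
  have hn := (one_sub_pow_pos hq0 hq1 n).ne'
  have hnk := (one_sub_pow_pos hq0 hq1 (n + 1 + k)).ne'
  have := (qPoch_pos hq0 hq1 n).ne'
  have := (qPoch_pos hq0 hq1 (n + 1 + k)).ne'
  rw [show n + 2 + k = n + 1 + k + 1 by ring, qexpTerm_succ hq0 hq1, qexpTerm_succ hq0 hq1,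
    qPoch_succ, qPoch_succ, qexpTerm, qexpTerm]
  field_simp
  ring

lemma qexpTerm_turan_neg (hq0 : 0 < q) (hq1 : q < 1) {z : ℝ} (hz : 0 < z) (n k : ℕ) :
    (q ^ (n + 2 + k) - q ^ (n + 1)) / (qPoch q (n + 1) * qPoch q (n + 2 + k)) *
      z ^ (n + 2 + k + n) < 0 := by
  have hnum : q ^ (n + 2 + k) - q ^ (n + 1) < 0 :=
    sub_neg.mpr (pow_lt_pow_right_of_lt_one₀ hq0 hq1 (by omega))
  have hden := mul_pos (qPoch_pos hq0.le hq1 (n + 1)) (qPoch_pos hq0.le hq1 (n + 2 + k))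
  exact mul_neg_of_neg_of_pos (div_neg_of_neg_of_pos hnum hden) (pow_pos hz _)

end

theorem I_turan_difference_general (q z : ℝ) (n : ℕ) (hq0 : 0 < q) (hq1 : q < 1)
    (hz0 : 0 < z) (hz1 : z < 1) :
    (qexpTail q z n * qexpTail q z (n + 2) - (qexpTail q z (n + 1)) ^ 2 =
      ∑' k : ℕ, (q ^ (n + 2 + k) - q ^ (n + 1)) / (qPoch q (n + 1) * qPoch q (n + 2 + k)) *
        z ^ (n + 2 + k + n)) ∧
    ∀ k : ℕ, (q ^ (n + 2 + k) - q ^ (n + 1)) / (qPoch q (n + 1) * qPoch q (n + 2 + k)) *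
        z ^ (n + 2 + k + n) < 0 := by
  have hz : |z| < 1 := by rwa [abs_of_pos hz0]
  refine ⟨?_, qexpTerm_turan_neg hq0 hq1 hz0 n⟩
  rw [qexpTail_turan_eq_tsum hq0.le hq1 hz n]
  exact tsum_congr (qexpTerm_turan hq0.le hq1 z n)

theorem I_turan_difference (q z : ℝ) (n : ℕ) (hq0 : 0 < q) (hq1 : q < 1)
    (hz0 : 0 < z) (hz1 : z < 1) (hn : 1 ≤ n) :
    (qexpTail q z n * qexpTail q z (n + 2) - (qexpTail q z (n + 1)) ^ 2 =
      ∑' k : ℕ, (q ^ (n + 2 + k) - q ^ (n + 1)) / (qPoch q (n + 1) * qPoch q (n + 2 + k)) *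
        z ^ (n + 2 + k + n)) ∧
    ∀ k : ℕ, (q ^ (n + 2 + k) - q ^ (n + 1)) / (qPoch q (n + 1) * qPoch q (n + 2 + k)) *
        z ^ (n + 2 + k + n) < 0 :=
  I_turan_difference_general q z n hq0 hq1 hz0 hz1
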